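/- arXiv:1305.1642 — 2 statements merged into one kernel-verified Lean document; each statement's English description precedes it below -/
import Mathlib

section
/- The sequence π_m(x,y) = Σ_{i=0}^m x^i y^{m−i} in ℚ[x,y] is W⁺-flat: L_m(π_n) − L_n(π_m) = (n − m)·π_{m+n} for all m, n ≥ 0. -/
open MvPolynomial

/-- The Witt operator `L_m = x^{m+1} ∂/∂x + y^{m+1} ∂/∂y` on `ℚ[x,y]`
(with `x = X 0`, `y = X 1`). -/
noncomputable def wittL (m : ℕ) (p : MvPolynomial (Fin 2) ℚ) :
    MvPolynomial (Fin 2) ℚ :=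
  ∑ i : Fin 2, X i ^ (m + 1) * pderiv i p

/-- `π_m(x,y) = Σ_{i=0}^m x^i y^{m-i}`. -/
noncomputable def piPoly (m : ℕ) : MvPolynomial (Fin 2) ℚ :=
  ∑ i ∈ Finset.range (m + 1), X (0 : Fin 2) ^ i * X (1 : Fin 2) ^ (m - i)

lemma wittL_sub (m : ℕ) (p q : MvPolynomial (Fin 2) ℚ) :
    wittL m (p - q) = wittL m p - wittL m q := by
  simp [wittL, map_sub, mul_sub, Finset.sum_sub_distrib]

lemma wittL_mul (m : ℕ) (p q : MvPolynomial (Fin 2) ℚ) :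
    wittL m (p * q) = wittL m p * q + p * wittL m q := by
  unfold wittL
  simp only [pderiv_mul, mul_add]
  rw [Finset.sum_add_distrib, Finset.sum_mul, Finset.mul_sum]
  congr 1
  · exact Finset.sum_congr rfl fun i _ => by ring
  · exact Finset.sum_congr rfl fun i _ => by ring

lemma wittL_X_pow (m k : ℕ) (j : Fin 2) :
    wittL m (X j ^ (k + 1)) = C ((k : ℚ) + 1) * X j ^ (m + k + 1) := by
  unfold wittL
  rw [Fin.sum_univ_two]
  fin_cases j <;>
    · simp [pderiv_pow]

      ring

lemma key (m : ℕ) :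
    (X 0 - X 1 : MvPolynomial (Fin 2) ℚ) * piPoly m = X 0 ^ (m + 1) - X 1 ^ (m + 1) := by
  have h := (Commute.all (X 0 : MvPolynomial (Fin 2) ℚ) (X 1)).mul_geom_sum₂ (m + 1)
  rw [← h]
  congr 1

lemma wittL_sigma (a b : ℕ) :
    wittL a ((X 0 : MvPolynomial (Fin 2) ℚ) ^ (b + 1) - X 1 ^ (b + 1)) =
      C ((b : ℚ) + 1) * ((X 0 - X 1) * piPoly (a + b)) := by
  rw [wittL_sub, wittL_X_pow, wittL_X_pow, key, mul_sub]

/-- The sequence `π_m` is `W⁺`-flat: `L_m π_n - L_n π_m = (n - m) π_{m+n}`. -/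
theorem piPoly_flat (m n : ℕ) :
    wittL m (piPoly n) - wittL n (piPoly m) =
      ((n : ℚ) - (m : ℚ)) • piPoly (m + n) := by
  have hD : (X 0 - X 1 : MvPolynomial (Fin 2) ℚ) ≠ 0 := by
    rw [sub_ne_zero]
    intro h
    exact absurd (X_injective h) (by decide)
  apply mul_left_cancel₀ hD
  have h1 : wittL m ((X 0 - X 1) * piPoly n) =
      wittL m (X 0 - X 1) * piPoly n + (X 0 - X 1) * wittL m (piPoly n) :=
    wittL_mul m _ _
  have h2 : wittL n ((X 0 - X 1) * piPoly m) =
      wittL n (X 0 - X 1) * piPoly m + (X 0 - X 1) * wittL n (piPoly m) :=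
    wittL_mul n _ _
  have e1 : wittL m (X 0 - X 1 : MvPolynomial (Fin 2) ℚ) = (X 0 - X 1) * piPoly m := by
    have := wittL_sub m (X 0) (X 1)
    have h0 : wittL m (X 0 : MvPolynomial (Fin 2) ℚ) = X 0 ^ (m + 1) := by
      simp [wittL, Fin.sum_univ_two]
    have h1' : wittL m (X 1 : MvPolynomial (Fin 2) ℚ) = X 1 ^ (m + 1) := by
      simp [wittL, Fin.sum_univ_two]
    rw [this, h0, h1', key]
  have e2 : wittL n (X 0 - X 1 : MvPolynomial (Fin 2) ℚ) = (X 0 - X 1) * piPoly n := by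
    have := wittL_sub n (X 0) (X 1)
    have h0 : wittL n (X 0 : MvPolynomial (Fin 2) ℚ) = X 0 ^ (n + 1) := by
      simp [wittL, Fin.sum_univ_two]
    have h1' : wittL n (X 1 : MvPolynomial (Fin 2) ℚ) = X 1 ^ (n + 1) := by
      simp [wittL, Fin.sum_univ_two]
    rw [this, h0, h1', key]
  rw [key n] at h1
  rw [key m] at h2
  rw [wittL_sigma m n] at h1
  rw [wittL_sigma n m, Nat.add_comm n m] at h2
  rw [e1] at h1
  rw [e2] at h2
  rw [smul_eq_C_mul, mul_sub, map_sub]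
  simp only [map_add, map_sub, map_one] at h1 h2 ⊢
  linear_combination h2 - h1
end

section
/- The quotient ring ℚ[x₁,x₂,y₁,y₂]/(e₁(y)−e₁(x), e₂(y)−e₂(x)) is a free module of rank 2 over the subring ℚ[x₁,x₂], with basis {1, y₂−y₁} (equivalently, generated freely by the classes of 1 and y₂−y₁). -/
/-!
In the quotient, `t = y₂ - y₁` satisfies `t² = e₁(y)² - 4 e₂(y) = e₁(x)² - 4 e₂(x) = (x₁ - x₂)²`,
and since `2` is invertible the relations give back `y₁ = (e₁(x) - t)/2` and `y₂ = (e₁(x) + t)/2`.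
So the quotient is `ℚ[x₁,x₂][t]/(t² - (x₁ - x₂)²)` as a `ℚ[x₁,x₂]`-module, and adjoining a root
of a monic quadratic gives a free module with basis `1, t`.
-/

open MvPolynomial

/-- The ideal `(e₁(y)−e₁(x), e₂(y)−e₂(x)) ⊆ ℚ[x₁,x₂,y₁,y₂]`
(with `x₁ = X 0`, `x₂ = X 1`, `y₁ = X 2`, `y₂ = X 3`). -/
noncomputable def soergelIdeal : Ideal (MvPolynomial (Fin 4) ℚ) :=
  Ideal.span ({X 2 + X 3 - X 0 - X 1, X 2 * X 3 - X 0 * X 1} :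
    Set (MvPolynomial (Fin 4) ℚ))

/-- The structure map `ℚ[x₁,x₂] → ℚ[x₁,x₂,y₁,y₂]/I`. -/
noncomputable def structMap :
    MvPolynomial (Fin 2) ℚ →+* MvPolynomial (Fin 4) ℚ ⧸ soergelIdeal :=
  (Ideal.Quotient.mk soergelIdeal).comp
    (rename (Fin.castAdd 2) : MvPolynomial (Fin 2) ℚ →ₐ[ℚ] MvPolynomial (Fin 4) ℚ).toRingHom

noncomputable instance :
    Module (MvPolynomial (Fin 2) ℚ) (MvPolynomial (Fin 4) ℚ ⧸ soergelIdeal) :=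
  Module.compHom _ structMap

theorem AdjoinRoot.exists_basis_root_pow {R : Type*} [CommRing R] {g : Polynomial R}
    (hg : g.Monic) {n : ℕ} (hn : g.natDegree = n) :
    ∃ b : Module.Basis (Fin n) R (AdjoinRoot g), ∀ i, b i = AdjoinRoot.root g ^ (i : ℕ) := by
  subst hn
  exact ⟨(AdjoinRoot.powerBasis' hg).basis, (AdjoinRoot.powerBasis' hg).basis_eq_pow⟩

theorem algebraMap_two_inv_mul_two (S : Type*) [Semiring S] [Algebra ℚ S] :
    algebraMap ℚ S 2⁻¹ * 2 = 1 := by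
  rw [← map_ofNat (algebraMap ℚ S) 2, ← map_mul, inv_mul_cancel₀ two_ne_zero, map_one]

namespace Soergel

local notation "R" => MvPolynomial (Fin 2) ℚ
local notation "P" => MvPolynomial (Fin 4) ℚ
local notation "A" => P ⧸ soergelIdeal

noncomputable def diffPoly : Polynomial R :=
  Polynomial.X ^ 2 - Polynomial.C ((X 0 - X 1) ^ 2)

local notation "S" => AdjoinRoot diffPoly

theorem diffPoly_monic : diffPoly.Monic := Polynomial.monic_X_pow_sub_C _ two_ne_zero

theorem diffPoly_natDegree : diffPoly.natDegree = 2 := Polynomial.natDegree_X_pow_sub_C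

theorem root_diffPoly_sq :
    AdjoinRoot.root diffPoly ^ 2 = AdjoinRoot.of diffPoly ((X 0 - X 1) ^ 2) := by
  rw [← sub_eq_zero, ← AdjoinRoot.mk_X, ← AdjoinRoot.mk_C, ← map_pow, ← map_sub]
  exact AdjoinRoot.mk_self

noncomputable def toAdjoinRoot : P →ₐ[ℚ] S :=
  aeval ![AdjoinRoot.of _ (X 0), AdjoinRoot.of _ (X 1),
    algebraMap ℚ S 2⁻¹ * (AdjoinRoot.of _ (X 0 + X 1) - AdjoinRoot.root _),
    algebraMap ℚ S 2⁻¹ * (AdjoinRoot.of _ (X 0 + X 1) + AdjoinRoot.root _)]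

theorem soergelIdeal_le_ker_toAdjoinRoot : soergelIdeal ≤ RingHom.ker toAdjoinRoot := by
  have hroot := root_diffPoly_sq
  have half := algebraMap_two_inv_mul_two S
  rw [soergelIdeal, Ideal.span_le]
  rintro p (rfl | rfl) <;>
    simp only [SetLike.mem_coe, RingHom.mem_ker, toAdjoinRoot, aeval_X, map_add, map_sub,
      map_mul, map_pow, Matrix.cons_val, Matrix.cons_val_zero, Matrix.cons_val_one,
      Fin.isValue] at hroot ⊢
  · linear_combination (AdjoinRoot.of diffPoly (X 0) + AdjoinRoot.of diffPoly (X 1)) * half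
  · set k := algebraMap ℚ S 2⁻¹
    set a := AdjoinRoot.of diffPoly (X 0)
    set b := AdjoinRoot.of diffPoly (X 1)
    linear_combination -k ^ 2 * hroot + a * b * (2 * k + 1) * half

noncomputable def quotientToAdjoinRoot : A →ₐ[ℚ] S :=
  Ideal.Quotient.liftₐ soergelIdeal toAdjoinRoot soergelIdeal_le_ker_toAdjoinRoot

theorem quotientToAdjoinRoot_mk (p : P) :
    quotientToAdjoinRoot (Ideal.Quotient.mk soergelIdeal p) = toAdjoinRoot p :=
  rfl

-- `structMap` as a `ℚ`-algebra map; the two agree definitionally.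
noncomputable def structMapₐ : R →ₐ[ℚ] A :=
  (Ideal.Quotient.mkₐ ℚ soergelIdeal).comp (rename (Fin.castAdd 2))

theorem eval₂_diffPoly_mk_X_three_sub_X_two :
    diffPoly.eval₂ structMap (Ideal.Quotient.mk soergelIdeal (X 3 - X 2)) = 0 := by
  have hmem : (X 3 - X 2) ^ 2 - (X 0 - X 1) ^ 2 ∈ soergelIdeal :=
    Ideal.mem_span_pair.mpr ⟨X 0 + X 1 + X 2 + X 3, -4, by ring⟩
  simpa [diffPoly, structMap, Polynomial.eval₂_sub, Polynomial.eval₂_pow]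
    using Ideal.Quotient.eq_zero_iff_mem.mpr hmem

noncomputable def adjoinRootToQuotient : S →ₐ[ℚ] A :=
  AdjoinRoot.liftAlgHom diffPoly structMapₐ _ eval₂_diffPoly_mk_X_three_sub_X_two

theorem adjoinRootToQuotient_of (r : R) :
    adjoinRootToQuotient (AdjoinRoot.of diffPoly r) = structMap r :=
  AdjoinRoot.liftAlgHom_of _ _ _ _ r

theorem adjoinRootToQuotient_root :
    adjoinRootToQuotient (AdjoinRoot.root diffPoly) =
      Ideal.Quotient.mk soergelIdeal (X 3 - X 2) :=
  AdjoinRoot.liftAlgHom_root _ _ _ _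

theorem mk_e₁_sub_e₁ : (Ideal.Quotient.mk soergelIdeal (X 2 + X 3 - X 0 - X 1) : A) = 0 :=
  Ideal.Quotient.eq_zero_iff_mem.mpr (Ideal.subset_span (by simp))

theorem adjoinRootToQuotient_comp_quotientToAdjoinRoot :
    adjoinRootToQuotient.comp quotientToAdjoinRoot = AlgHom.id ℚ A := by
  have half := algebraMap_two_inv_mul_two A
  have he := mk_e₁_sub_e₁
  apply Ideal.Quotient.algHom_ext ℚ
  apply MvPolynomial.algHom_ext
  intro i
  fin_cases i <;>
    simp only [AlgHom.comp_apply, AlgHom.id_comp, Ideal.Quotient.mkₐ_eq_mk,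
      quotientToAdjoinRoot_mk, toAdjoinRoot, aeval_X, Matrix.cons_val, Matrix.cons_val_zero, Matrix.cons_val_one,
      map_add, map_sub, map_mul, AlgHom.commutes, adjoinRootToQuotient_of,
      adjoinRootToQuotient_root, structMap, AlgHom.toRingHom_eq_coe, RingHom.coe_comp,
      RingHom.coe_coe, Function.comp_apply, rename_X, Fin.reduceCastAdd, Fin.isValue,
      Fin.zero_eta, Fin.mk_one, Fin.reduceFinMk] at he ⊢
  · linear_combination -algebraMap ℚ A 2⁻¹ * he + Ideal.Quotient.mk soergelIdeal (X 2) * half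
  · linear_combination -algebraMap ℚ A 2⁻¹ * he + Ideal.Quotient.mk soergelIdeal (X 3) * half

theorem quotientToAdjoinRoot_comp_adjoinRootToQuotient :
    quotientToAdjoinRoot.comp adjoinRootToQuotient = AlgHom.id ℚ S := by
  apply AdjoinRoot.algHom_ext'
  · apply MvPolynomial.algHom_ext
    intro i
    fin_cases i <;>
      simp [quotientToAdjoinRoot_mk, toAdjoinRoot, adjoinRootToQuotient_of, structMap]
  · simp only [AlgHom.comp_apply, adjoinRootToQuotient_root, quotientToAdjoinRoot_mk, map_sub,
      toAdjoinRoot, aeval_X, map_add, Matrix.cons_val, AlgHom.coe_id, id_eq]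
    linear_combination AdjoinRoot.root diffPoly * algebraMap_two_inv_mul_two S

noncomputable def adjoinRootEquivQuotient : S ≃ₗ[R] A where
  toFun := adjoinRootToQuotient
  invFun := quotientToAdjoinRoot
  map_add' := map_add adjoinRootToQuotient
  map_smul' r z := by
    rw [Algebra.smul_def, map_mul, AdjoinRoot.algebraMap_eq, adjoinRootToQuotient_of]
    rfl
  left_inv := AlgHom.congr_fun quotientToAdjoinRoot_comp_adjoinRootToQuotient
  right_inv := AlgHom.congr_fun adjoinRootToQuotient_comp_quotientToAdjoinRoot

theorem adjoinRootEquivQuotient_apply (z : S) :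
    adjoinRootEquivQuotient z = adjoinRootToQuotient z :=
  rfl

end Soergel

/-- The quotient `ℚ[x₁,x₂,y₁,y₂]/(e₁(y)−e₁(x), e₂(y)−e₂(x))` is a free
`ℚ[x₁,x₂]`-module of rank 2 with basis `{1, y₂−y₁}`. -/
theorem soergel_free_rank_two :
    ∃ b : Module.Basis (Fin 2) (MvPolynomial (Fin 2) ℚ)
        (MvPolynomial (Fin 4) ℚ ⧸ soergelIdeal),
      b 0 = 1 ∧ b 1 = Ideal.Quotient.mk soergelIdeal (X 3 - X 2) := by
  obtain ⟨b, hb⟩ := AdjoinRoot.exists_basis_root_pow Soergel.diffPoly_monic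
    Soergel.diffPoly_natDegree
  refine ⟨b.map Soergel.adjoinRootEquivQuotient, ?_, ?_⟩
  · simp [hb, Soergel.adjoinRootEquivQuotient_apply]
  · simp [hb, Soergel.adjoinRootEquivQuotient_apply, Soergel.adjoinRootToQuotient_root]
end
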